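/- Let $A, B$ be disjoint sets of size $n$ and suppose there exist pairwise edge-disjoint bipartite graphs $G_1, \dots, G_m$ with parts $A, B$ such that for any distinct $x_1, \dots, x_s \in A \cup B$, fewer than $t$ vertices $y \in A \cup B$ satisfy: there exists $i \in [m]$ with $x_1 y, \dots, x_s y \in E(G_i)$. Let $e = \sum_{i=1}^m e(G_i)$. Then there exists a $2k$-uniform hypergraph on $2kn$ vertices with at least $e^k/m$ edges containing no copy of $K_{s,t}^{(2k)}$; in particular $\mathrm{ex}(2kn, K_{s,t}^{(2k)}) \ge e^k/m$. -/

import Mathlib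

/-- Adjacency in a bipartite graph on parts `A ⊕ B` (both copies of `Fin n`),
whose edge set is given as a finset of pairs in `A × B`. -/
def badj {n : ℕ} (E : Finset (Fin n × Fin n)) :
    (Fin n ⊕ Fin n) → (Fin n ⊕ Fin n) → Prop
  | Sum.inl a, Sum.inr b => (a, b) ∈ E
  | Sum.inr b, Sum.inl a => (a, b) ∈ E
  | _, _ => False

/-- The `r`-uniform hypergraph `G` contains a copy of `K_{s,t}^{(r)}`. -/
def ContainsKst {V : Type*} [DecidableEq V] (r s t : ℕ)
    (G : Finset (Finset V)) : Prop :=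
  ∃ (X : Finset V) (Y : Fin t → Finset V),
    X.card = s ∧ (∀ i, (Y i).card = r - 1) ∧
    (∀ i, Disjoint X (Y i)) ∧ (∀ i j, i ≠ j → Disjoint (Y i) (Y j)) ∧
    ∀ x ∈ X, ∀ i, insert x (Y i) ∈ G

/-!
Each hyperedge is the graph of a function `Fin k × Bool → Fin n`, read off from a tuple of `k`
coloured edges (`ℓ`-th edge in `G_{i_ℓ}`) whose colours sum to `p` in `Fin m`. Of the `e^k`
coloured tuples some fibre `p` carries at least `e^k / m`, and since the `G_i` are edge-disjoint,
distinct tuples give distinct hyperedges.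

In a copy of `K_{s,t}` each `Y i` misses exactly one of the `2k` positions, so all of `X` sits at
one position `(ℓ, b)`. Two hyperedges through `Y i` share every block except `ℓ`, hence every
colour except the one of block `ℓ` (disjointness), hence that one too (the colour sum). So the
vertex of `Y i` at position `(ℓ, !b)` is a common neighbour of all of `X` in one graph `G_{c_i}`,
and these are `t` distinct vertices, contrary to the hypothesis.
-/

open Finset Function

theorem ContainsKst.image_map {V V' : Type*} [DecidableEq V] [DecidableEq V'] {r s t : ℕ}
    {G : Finset (Finset V)} (f : V ↪ V') (h : ContainsKst r s t G) :
    ContainsKst r s t (G.image (Finset.map f)) := by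
  obtain ⟨X, Y, hX, hY, hXY, hYY, hmem⟩ := h
  refine ⟨X.map f, fun i => (Y i).map f, by simpa using hX, by simpa using hY,
    fun i => by simpa using hXY i, fun i j hij => by simpa using hYY i j hij, ?_⟩
  simp only [mem_map, mem_image, forall_exists_index, and_imp, forall_apply_eq_imp_iff₂]
  exact fun x hx i => ⟨_, hmem x hx i, map_insert f x (Y i)⟩

theorem ContainsKst.of_image_map_equiv {V V' : Type*} [DecidableEq V] [DecidableEq V']
    {r s t : ℕ} {G : Finset (Finset V)} (e : V ≃ V')
    (h : ContainsKst r s t (G.image (Finset.map e.toEmbedding))) : ContainsKst r s t G := by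
  have h' := h.image_map e.symm.toEmbedding
  rwa [image_image, show map e.symm.toEmbedding ∘ map e.toEmbedding = id from
    funext fun A => by ext; simp, image_id] at h'

theorem Finset.exists_card_le_mul_card_fiber {α β : Type*} [Fintype β] [Nonempty β]
    [DecidableEq β] (s : Finset α) (f : α → β) :
    ∃ y, #s ≤ Fintype.card β * #{x ∈ s | f x = y} := by
  obtain ⟨y, -, hy⟩ := exists_le_of_sum_le (s := univ) univ_nonempty
    (f := fun _ => #s) (g := fun y => Fintype.card β * #{x ∈ s | f x = y}) (by
      rw [sum_const, ← mul_sum, ← card_eq_sum_card_fiberwise (fun x _ => mem_univ (f x)),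
        card_univ, smul_eq_mul])
  exact ⟨y, hy⟩

theorem Fintype.apply_eq_of_sum_eq_of_forall_ne {ι M : Type*} [Fintype ι] [DecidableEq ι]
    [AddCancelCommMonoid M] {f g : ι → M} (hsum : ∑ i, f i = ∑ i, g i) {i₀ : ι}
    (hne : ∀ i, i ≠ i₀ → f i = g i) : f i₀ = g i₀ := by
  have hrest : ∑ i ∈ univ.erase i₀, f i = ∑ i ∈ univ.erase i₀, g i :=
    Finset.sum_congr rfl fun i hi => hne i (ne_of_mem_erase hi)
  rw [← add_sum_erase univ f (mem_univ i₀), ← add_sum_erase univ g (mem_univ i₀), hrest] at hsum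
  exact add_right_cancel hsum

theorem ncard_setOf_forall_mem_lt {ι V : Type*} {R : ι → V → V → Prop} {s t : ℕ}
    (h : ∀ x : Fin s → V, Injective x → {y | ∃ i, ∀ j, R i (x j) y}.ncard < t)
    (Z : Finset V) (hZ : #Z = s) : {y | ∃ i, ∀ z ∈ Z, R i z y}.ncard < t := by
  let e := Z.equivFinOfCardEq hZ
  convert h (fun j => e.symm j) (Subtype.val_injective.comp e.symm.injective) using 4
  exact exists_congr fun i =>
    ⟨fun hR j => hR _ (e.symm j).2, fun hR z hz => by simpa using hR (e ⟨z, hz⟩)⟩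

section FunctionGraph

variable {P α : Type*} [Fintype P] [DecidableEq P] [DecidableEq α]

def fnGraph (g : P → α) : Finset (P × α) := univ.image fun q => (q, g q)

@[simp] theorem mem_fnGraph {g : P → α} {v : P × α} : v ∈ fnGraph g ↔ g v.1 = v.2 := by
  constructor
  · simp only [fnGraph, mem_image, mem_univ, true_and, forall_exists_index]
    rintro q rfl
    rfl
  · exact fun h => mem_image.2 ⟨v.1, mem_univ _, by rw [h]⟩

theorem card_fnGraph (g : P → α) : #(fnGraph g) = Fintype.card P :=
  card_image_of_injective _ fun _ _ h => congrArg Prod.fst h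

theorem fnGraph_injective : Injective (fnGraph : (P → α) → Finset (P × α)) :=
  fun g g' h => funext fun q => (mem_fnGraph.1 (h ▸ mem_fnGraph.2 rfl : (q, g q) ∈ fnGraph g')).symm

variable {A : Finset (P × α)} {x x' : P × α} {g g' : P → α}

theorem fst_eq_iff_of_insert_eq_fnGraph (h : insert x A = fnGraph g) (hx : x ∉ A) (q : P) :
    q = x.1 ↔ ∀ v ∈ A, v.1 ≠ q := by
  have hA : ∀ v ∈ A, g v.1 = v.2 := fun v hv => mem_fnGraph.1 (h ▸ mem_insert_of_mem hv)
  constructor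
  · rintro rfl v hv hvx
    have hgx : g x.1 = x.2 := mem_fnGraph.1 (h ▸ mem_insert_self x A)
    exact hx (Prod.ext hvx (by rw [← hA v hv, hvx, hgx]) ▸ hv)
  · intro hq
    have : (q, g q) ∈ insert x A := h ▸ mem_fnGraph.2 rfl
    rcases mem_insert.1 this with hqx | hqA
    · exact congrArg Prod.fst hqx
    · exact absurd rfl (hq _ hqA)

theorem fst_eq_of_insert_eq_fnGraph (h : insert x A = fnGraph g) (hx : x ∉ A)
    (h' : insert x' A = fnGraph g') (hx' : x' ∉ A) : x'.1 = x.1 :=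
  (fst_eq_iff_of_insert_eq_fnGraph h hx _).2 <|
    (fst_eq_iff_of_insert_eq_fnGraph h' hx' _).1 rfl

theorem mk_mem_of_insert_eq_fnGraph (h : insert x A = fnGraph g) {q : P} (hq : q ≠ x.1) :
    (q, g q) ∈ A := by
  have : (q, g q) ∈ insert x A := h ▸ mem_fnGraph.2 rfl
  exact (mem_insert.1 this).resolve_left fun hqx => hq (congrArg Prod.fst hqx)

theorem apply_eq_of_insert_eq_fnGraph (h : insert x A = fnGraph g) (hA : A ⊆ fnGraph g')
    {q : P} (hq : q ≠ x.1) : g' q = g q :=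
  mem_fnGraph.1 (hA (mk_mem_of_insert_eq_fnGraph h hq))

end FunctionGraph

namespace KstConstruction

variable {n m k : ℕ} (E : Fin m → Finset (Fin n × Fin n))

/-- `false` is the side `A`, `true` the side `B`. -/
def side (b : Bool) (a : Fin n) : Fin n ⊕ Fin n := cond b (Sum.inr a) (Sum.inl a)

theorem side_injective (b : Bool) : Injective (side (n := n) b) := by
  cases b
  exacts [Sum.inl_injective, Sum.inr_injective]

def colouredTuples (k : ℕ) : Finset (Fin k → Σ _ : Fin m, Fin n × Fin n) :=
  Fintype.piFinset fun _ => univ.sigma E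

theorem card_colouredTuples : #(colouredTuples E k) = (∑ i, #(E i)) ^ k := by
  simp [colouredTuples, card_sigma]

/-- The hyperedge of `c` is the graph of this function: its vertex at position `(ℓ, b)` is side
`b` of the `ℓ`-th edge of `c`, so the `2k` parts are the copies of `Fin n` indexed by
`Fin k × Bool`. -/
def vertexFn (c : Fin k → Σ _ : Fin m, Fin n × Fin n) (q : Fin k × Bool) : Fin n :=
  cond q.2 (c q.1).2.2 (c q.1).2.1

theorem badj_side_vertexFn_iff (c : Fin k → Σ _ : Fin m, Fin n × Fin n) (ℓ : Fin k) (b : Bool)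
    (F : Finset (Fin n × Fin n)) :
    badj F (side b (vertexFn c (ℓ, b))) (side (!b) (vertexFn c (ℓ, !b))) ↔ (c ℓ).2 ∈ F := by
  cases b <;> rfl

def hyperedge (c : Fin k → Σ _ : Fin m, Fin n × Fin n) : Finset ((Fin k × Bool) × Fin n) :=
  fnGraph (vertexFn c)

def fibre [NeZero m] (k : ℕ) (p : Fin m) : Finset (Fin k → Σ _ : Fin m, Fin n × Fin n) :=
  {c ∈ colouredTuples E k | ∑ ℓ, (c ℓ).1 = p}

def hypergraph [NeZero m] (k : ℕ) (p : Fin m) : Finset (Finset ((Fin k × Bool) × Fin n)) :=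
  (fibre E k p).image hyperedge

variable {E}

theorem colour_eq_of_snd_eq (hdisj : ∀ i j, i ≠ j → Disjoint (E i) (E j))
    {u v : Σ _ : Fin m, Fin n × Fin n} (hu : u ∈ univ.sigma E)
    (hv : v ∈ univ.sigma E) (h : u.2 = v.2) : u.1 = v.1 := by
  by_contra hne
  simp only [mem_sigma, mem_univ, true_and] at hu hv
  exact disjoint_left.1 (hdisj _ _ hne) hu (h ▸ hv)

theorem injOn_hyperedge (hdisj : ∀ i j, i ≠ j → Disjoint (E i) (E j)) :
    Set.InjOn hyperedge (colouredTuples E k : Set (Fin k → Σ _ : Fin m, Fin n × Fin n)) := by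
  intro c hc c' hc' h
  have hfn := fnGraph_injective h
  funext ℓ
  have hsnd : (c ℓ).2 = (c' ℓ).2 :=
    Prod.ext (congrFun hfn (ℓ, false)) (congrFun hfn (ℓ, true))
  simp only [colouredTuples, mem_coe, Fintype.mem_piFinset] at hc hc'
  exact Sigma.ext (colour_eq_of_snd_eq hdisj (hc ℓ) (hc' ℓ) hsnd) (heq_of_eq hsnd)

theorem card_hypergraph [NeZero m] (hdisj : ∀ i j, i ≠ j → Disjoint (E i) (E j)) (p : Fin m) :
    #(hypergraph E k p) = #(fibre E k p) :=
  card_image_of_injOn <| (injOn_hyperedge hdisj).mono fun _ hc => (mem_filter.1 hc).1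

/-- The colours outside `ℓ₀` agree by disjointness, so the colour sums force the one at `ℓ₀`. -/
theorem colour_eq_of_forall_ne [NeZero m] (hdisj : ∀ i j, i ≠ j → Disjoint (E i) (E j))
    {p : Fin m} {c c' : Fin k → Σ _ : Fin m, Fin n × Fin n}
    (hc : c ∈ fibre E k p) (hc' : c' ∈ fibre E k p) {ℓ₀ : Fin k}
    (h : ∀ ℓ, ℓ ≠ ℓ₀ → (c ℓ).2 = (c' ℓ).2) : (c ℓ₀).1 = (c' ℓ₀).1 := by
  simp only [fibre, colouredTuples, mem_filter, Fintype.mem_piFinset] at hc hc'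
  exact Fintype.apply_eq_of_sum_eq_of_forall_ne (hc.2.trans hc'.2.symm) fun ℓ hℓ =>
    colour_eq_of_snd_eq hdisj (hc.1 ℓ) (hc'.1 ℓ) (h ℓ hℓ)

/-- If `x` and `x'` both complete `A` to hyperedges of one fibre, then `x'` occupies the position
`(ℓ, b)` of `x` and is adjacent to the vertex at `(ℓ, !b)` of the edge through `x`, in the graph
of the colour of block `ℓ` of that edge. -/
theorem badj_of_insert_eq_hyperedge [NeZero m] (hdisj : ∀ i j, i ≠ j → Disjoint (E i) (E j))
    {p : Fin m} {A : Finset ((Fin k × Bool) × Fin n)} {x x' : (Fin k × Bool) × Fin n}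
    {c c' : Fin k → Σ _ : Fin m, Fin n × Fin n} (hc : c ∈ fibre E k p) (hc' : c' ∈ fibre E k p)
    (hx : insert x A = hyperedge c) (hxA : x ∉ A)
    (hx' : insert x' A = hyperedge c') (hx'A : x' ∉ A) :
    badj (E (c x.1.1).1) (side x.1.2 x'.2) (side (!x.1.2) (vertexFn c (x.1.1, !x.1.2))) := by
  obtain ⟨⟨ℓ₀, b₀⟩, v⟩ := x
  rw [hyperedge] at hx hx'
  have hpos : x'.1 = (ℓ₀, b₀) := fst_eq_of_insert_eq_fnGraph hx hxA hx' hx'A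
  have hagree : ∀ q, q ≠ (ℓ₀, b₀) → vertexFn c' q = vertexFn c q :=
    fun q hq => apply_eq_of_insert_eq_fnGraph hx (hx' ▸ subset_insert _ _) hq
  have hcolour : (c ℓ₀).1 = (c' ℓ₀).1 := colour_eq_of_forall_ne hdisj hc hc' fun ℓ hℓ =>
    Prod.ext (hagree (ℓ, false) (by simp [hℓ])).symm (hagree (ℓ, true) (by simp [hℓ])).symm
  have hx'v : x'.2 = vertexFn c' (ℓ₀, b₀) :=
    hpos ▸ (mem_fnGraph.1 (hx' ▸ mem_insert_self x' A)).symm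
  rw [hcolour, hx'v, ← hagree (ℓ₀, !b₀) (by simp), badj_side_vertexFn_iff]
  simp only [fibre, colouredTuples, mem_filter, Fintype.mem_piFinset, mem_sigma, mem_univ,
    true_and] at hc'
  exact hc'.1 ℓ₀

theorem not_containsKst_hypergraph [NeZero m] (hdisj : ∀ i j, i ≠ j → Disjoint (E i) (E j))
    {s t : ℕ} (hs : 0 < s) (ht : 0 < t)
    (hrich : ∀ x : Fin s → (Fin n ⊕ Fin n), Injective x →
      {y | ∃ i, ∀ j, badj (E i) (x j) y}.ncard < t) (r : ℕ) (p : Fin m) :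
    ¬ ContainsKst r s t (hypergraph E k p) := by
  rintro ⟨X, Y, hX, -, hXY, hYY, hmem⟩
  have hedge : ∀ x ∈ X, ∀ i, ∃ c ∈ fibre E k p, insert x (Y i) = hyperedge c := fun x hx i =>
    let ⟨c, hc, h⟩ := mem_image.1 (hmem x hx i); ⟨c, hc, h.symm⟩
  have hnot : ∀ x ∈ X, ∀ i, x ∉ Y i := fun x hx i => disjoint_left.1 (hXY i) hx
  obtain ⟨x₀, hx₀⟩ : X.Nonempty := card_pos.1 (hX ▸ hs)
  choose c₀ hc₀ hx₀c₀ using hedge x₀ hx₀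
  set q₀ : Fin k × Bool := (x₀.1.1, !x₀.1.2)
  have hq₀ : q₀ ≠ x₀.1 := by simp [q₀, Prod.ext_iff]
  set y : Fin t → Fin n ⊕ Fin n := fun i => side q₀.2 (vertexFn (c₀ i) q₀)
  have hy : Injective y := by
    intro i j hij
    by_contra hne
    have hY : ∀ i, (q₀, vertexFn (c₀ i) q₀) ∈ Y i := fun i =>
      mk_mem_of_insert_eq_fnGraph (hx₀c₀ i) hq₀
    exact disjoint_left.1 (hYY i j hne) (hY i) (side_injective _ hij ▸ hY j)
  have hfst : ∀ x ∈ X, x.1 = x₀.1 := fun x hx =>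
    let ⟨_, _, h⟩ := hedge x hx ⟨0, ht⟩
    fst_eq_of_insert_eq_fnGraph (hx₀c₀ _) (hnot x₀ hx₀ _) h (hnot x hx _)
  set Z := X.image fun x => side x₀.1.2 x.2
  have hZ : #Z = s := by
    rw [card_image_of_injOn, hX]
    intro x hx x' hx' h
    exact Prod.ext ((hfst x hx).trans (hfst x' hx').symm) (side_injective _ h)
  have hcommon : Set.range y ⊆ {y | ∃ i, ∀ z ∈ Z, badj (E i) z y} := by
    rintro _ ⟨i, rfl⟩
    refine ⟨(c₀ i x₀.1.1).1, ?_⟩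
    simp only [Z, mem_image, forall_exists_index, and_imp, forall_apply_eq_imp_iff₂]
    intro x hx
    obtain ⟨c, hc, h⟩ := hedge x hx i
    exact badj_of_insert_eq_hyperedge hdisj (hc₀ i) hc (hx₀c₀ i) (hnot _ hx₀ i) h (hnot x hx i)
  have ht_le := Set.ncard_le_ncard hcommon
  rw [Set.ncard_range_of_injective hy, Nat.card_eq_fintype_card, Fintype.card_fin] at ht_le
  exact (ncard_setOf_forall_mem_lt hrich Z hZ).not_ge ht_le

end KstConstruction

open KstConstruction in
/-- Lower bound lemma: from `m` pairwise edge-disjoint bipartite graphs on parts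
of size `n` in which no `s` distinct vertices have `t` common neighbours (within
one of the graphs), one obtains a `K_{s,t}^{(2k)}`-free `2k`-uniform hypergraph
on `2kn` vertices with at least `e^k/m` edges. -/
theorem stmt_4 (n m s t k : ℕ) (hs : 2 ≤ s) (ht : 1 ≤ t) (hk : 1 ≤ k)
    (E : Fin m → Finset (Fin n × Fin n))
    (hdisj : ∀ i j, i ≠ j → Disjoint (E i) (E j))
    (hrich : ∀ x : Fin s → (Fin n ⊕ Fin n), Function.Injective x →
      {y : Fin n ⊕ Fin n | ∃ i, ∀ j, badj (E i) (x j) y}.ncard < t) :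
    ∃ G : Finset (Finset (Fin (2 * k * n))),
      (∀ e ∈ G, e.card = 2 * k) ∧ ¬ ContainsKst (2 * k) s t G ∧
      (∑ i, (E i).card) ^ k ≤ m * G.card := by
  rcases Nat.eq_zero_or_pos m with rfl | hm
  · refine ⟨∅, by simp, ?_, by simp [Nat.zero_pow hk]⟩
    rintro ⟨X, Y, hX, -, -, -, hmem⟩
    obtain ⟨x, hx⟩ : X.Nonempty := card_pos.1 (by omega)
    exact notMem_empty _ (hmem x hx ⟨0, ht⟩)
  have : NeZero m := ⟨hm.ne'⟩
  obtain ⟨p, hp⟩ := exists_card_le_mul_card_fiber (colouredTuples E k) fun c => ∑ ℓ, (c ℓ).1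
  have hcard : Fintype.card ((Fin k × Bool) × Fin n) = 2 * k * n := by
    simp only [Fintype.card_prod, Fintype.card_fin, Fintype.card_bool]
    ring
  let e := Fintype.equivFinOfCardEq hcard
  refine ⟨(hypergraph E k p).image (map e.toEmbedding), ?_, fun h => ?_, ?_⟩
  · simp only [hypergraph, hyperedge, mem_image, forall_exists_index, and_imp]
    rintro _ _ c - rfl rfl
    rw [card_map, card_fnGraph, Fintype.card_prod, Fintype.card_fin, Fintype.card_bool, mul_comm]
  · exact not_containsKst_hypergraph hdisj (by omega) ht hrich _ p (h.of_image_map_equiv e)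
  · rw [card_image_of_injective _ (map_injective _), card_hypergraph hdisj, ← card_colouredTuples]
    simpa [fibre] using hp
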